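/- Let μ be the uniform product measure on 2^ω, t a finite partial function (node) with μ(U ∩ [t])/μ([t]) ≤ 1 − 2^{-(n+1)} for an open set U, and let I be a finite interval above the domain of t. Define U^t = {s ∈ 2^I : μ([t⌢s] ∩ U)/μ([t⌢s]) ≥ 1 − 2^{-(n+2)}}. Then |U^t|/2^{|I|} ≤ (2^{n+2}/(2^{n+2} − 1)) · (μ(U ∩ [t])/μ([t])) ≤ (2^{n+2} − 2)/(2^{n+2} − 1). -/
import Mathlib


open MeasureTheory
open scoped Classical ENNReal

/-- If `t` is a node with relative density `μ(U ∩ [t])/μ([t]) ≤ 1 − 2^{-(n+1)}` for an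
open set `U`, and `I = [L, L+M)` is a finite interval above the domain `[0,N)` of `t`,
then `U^t = {s ∈ 2^I : μ([t⌢s] ∩ U)/μ([t⌢s]) ≥ 1 − 2^{-(n+2)}}` satisfies
`|U^t|/2^{|I|} ≤ (2^{n+2}/(2^{n+2}−1))·(μ(U∩[t])/μ([t])) ≤ (2^{n+2}−2)/(2^{n+2}−1)`. -/
theorem stmt14 (μ : Measure (ℕ → Bool)) [IsProbabilityMeasure μ]
    (hμ : ∀ (s : Finset ℕ) (f : ℕ → Bool),
      μ {x | ∀ i ∈ s, x i = f i} = (1 / 2 : ℝ≥0∞) ^ s.card)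
    (U : Set (ℕ → Bool)) (hU : IsOpen U)
    (n N L M : ℕ) (hLN : N ≤ L) (hM : 0 < M)
    (t : Fin N → Bool)
    (hdens : (μ ({x | ∀ i : Fin N, x i = t i} ∩ U)).toReal
        ≤ (1 - (1 / 2 : ℝ) ^ (n + 1)) * (μ {x | ∀ i : Fin N, x i = t i}).toReal) :
    ((Finset.univ.filter (fun s : Fin M → Bool =>
        (1 - (1 / 2 : ℝ) ^ (n + 2)) *
            (μ {x | (∀ i : Fin N, x i = t i) ∧ ∀ j : Fin M, x (L + j) = s j}).toReal
          ≤ (μ ({x | (∀ i : Fin N, x i = t i) ∧ ∀ j : Fin M, x (L + j) = s j}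
              ∩ U)).toReal)).card : ℝ) / 2 ^ M
      ≤ (2 ^ (n + 2) / (2 ^ (n + 2) - 1)) *
          ((μ ({x | ∀ i : Fin N, x i = t i} ∩ U)).toReal /
            (μ {x | ∀ i : Fin N, x i = t i}).toReal) ∧
    (2 ^ (n + 2) / (2 ^ (n + 2) - 1) : ℝ) *
        ((μ ({x | ∀ i : Fin N, x i = t i} ∩ U)).toReal /
          (μ {x | ∀ i : Fin N, x i = t i}).toReal)
      ≤ (2 ^ (n + 2) - 2) / (2 ^ (n + 2) - 1) := by
  set T : Set (ℕ → Bool) := {x | ∀ i : Fin N, x i = t i} with hTdef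
  set A : (Fin M → Bool) → Set (ℕ → Bool) :=
    fun s => {x | (∀ i : Fin N, x i = t i) ∧ ∀ j : Fin M, x (L + j) = s j} with hAdef
  -- cylinder descriptions
  have hTcyl : T = {x : ℕ → Bool | ∀ i ∈ Finset.range N, x i =
      (fun i => if h : i < N then t ⟨i, h⟩ else false) i} := by
    ext x
    simp only [hTdef, Set.mem_setOf_eq, Finset.mem_range]
    constructor
    · intro h i hi; simp [dif_pos hi, h ⟨i, hi⟩]
    · intro h i; simpa [dif_pos i.2] using h i i.2
  have hTμ : μ T = (1 / 2 : ℝ≥0∞) ^ N := by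
    rw [hTcyl, hμ, Finset.card_range]
  -- finite set for extended cylinder
  set S : Finset ℕ := Finset.range N ∪ (Finset.range M).image (fun j => L + j) with hSdef
  have hScard : S.card = N + M := by
    rw [hSdef, Finset.card_union_of_disjoint, Finset.card_range, Finset.card_image_of_injective,
      Finset.card_range]
    · exact fun a b h => by omega
    · rw [Finset.disjoint_left]
      intro a ha hb
      simp only [Finset.mem_range] at ha
      simp only [Finset.mem_image, Finset.mem_range] at hb
      omega
  have hAcyl : ∀ s : Fin M → Bool, A s = {x : ℕ → Bool | ∀ i ∈ S, x i =
      (fun i => if h : i < N then t ⟨i, h⟩ else if h' : i - L < M then s ⟨i - L, h'⟩ else false) i} := by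
    intro s
    ext x
    simp only [hAdef, Set.mem_setOf_eq, hSdef, Finset.mem_union, Finset.mem_range,
      Finset.mem_image]
    constructor
    · rintro ⟨h1, h2⟩ i hi
      rcases hi with hi | ⟨j, hj, rfl⟩
      · simp [dif_pos hi, h1 ⟨i, hi⟩]
      · have hiN : ¬ (L + j < N) := by omega
        have hjM : L + j - L < M := by omega
        rw [dif_neg hiN, dif_pos hjM]
        have heq : (⟨L + j - L, hjM⟩ : Fin M) = ⟨j, hj⟩ := Fin.ext (by simp)
        rw [heq]
        exact h2 ⟨j, hj⟩
    · intro h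
      constructor
      · intro i
        have := h i (Or.inl i.2)
        simpa [dif_pos i.2] using this
      · intro j
        have hmem : (N : ℕ) ≤ L + j := by omega
        have := h (L + j) (Or.inr ⟨j, j.2, rfl⟩)
        have hiN : ¬ (L + (j : ℕ) < N) := by omega
        have hjM : L + (j : ℕ) - L < M := by omega
        rw [dif_neg hiN, dif_pos hjM] at this
        have heq : (⟨L + (j : ℕ) - L, hjM⟩ : Fin M) = j := Fin.ext (by simp)
        rw [this, heq]
  have hAμ : ∀ s, μ (A s) = (1 / 2 : ℝ≥0∞) ^ (N + M) := by
    intro s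
    rw [hAcyl s, hμ, hScard]
  -- measurability
  have hAm : ∀ s, MeasurableSet (A s) := by
    intro s
    rw [hAcyl s]
    have h : {x : ℕ → Bool | ∀ i ∈ S, x i =
        (fun i => if h : i < N then t ⟨i, h⟩ else if h' : i - L < M then s ⟨i - L, h'⟩ else false) i}
        = ⋂ i ∈ S, {x : ℕ → Bool | x i =
          (fun i => if h : i < N then t ⟨i, h⟩ else if h' : i - L < M then s ⟨i - L, h'⟩ else false) i} := by
      ext; simp
    rw [h]
    exact MeasurableSet.biInter S.countable_toSet fun i _ =>
      (measurable_pi_apply i) (measurableSet_singleton _)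
  -- partition
  have hUnion : (⋃ s : Fin M → Bool, A s ∩ U) = T ∩ U := by
    ext x
    simp only [Set.mem_iUnion, Set.mem_inter_iff, hAdef, hTdef, Set.mem_setOf_eq]
    constructor
    · rintro ⟨s, ⟨h1, _⟩, h2⟩; exact ⟨h1, h2⟩
    · rintro ⟨h1, h2⟩
      exact ⟨fun j => x (L + j), ⟨h1, fun j => rfl⟩, h2⟩
  have hdisj : Pairwise (Function.onFun Disjoint (fun s : Fin M → Bool => A s ∩ U)) := by
    intro s s' hss
    simp only [Function.onFun, Set.disjoint_left]
    rintro x ⟨⟨_, h2⟩, _⟩ ⟨⟨_, h2'⟩, _⟩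
    apply hss
    funext j
    rw [← h2 j, ← h2' j]
  have hsum : μ (T ∩ U) = ∑ s : Fin M → Bool, μ (A s ∩ U) := by
    rw [← hUnion, measure_iUnion hdisj (fun s => (hAm s).inter hU.measurableSet), tsum_fintype]
  -- to real
  have hfin : ∀ s : Fin M → Bool, μ (A s ∩ U) ≠ ∞ := fun s => measure_ne_top μ _
  have hsumR : (μ (T ∩ U)).toReal = ∑ s : Fin M → Bool, (μ (A s ∩ U)).toReal := by
    rw [hsum, ENNReal.toReal_sum (fun s _ => hfin s)]
  -- real values
  have hTR : (μ T).toReal = (1 / 2 : ℝ) ^ N := by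
    rw [hTμ]; simp [ENNReal.toReal_pow]
  have hAR : ∀ s, (μ (A s)).toReal = (1 / 2 : ℝ) ^ (N + M) := by
    intro s; rw [hAμ]; simp [ENNReal.toReal_pow]
  set c : ℝ := (μ (T ∩ U)).toReal with hc
  set b : (Fin M → Bool) → ℝ := fun s => (μ (A s ∩ U)).toReal with hb
  have hbnn : ∀ s, 0 ≤ b s := fun s => ENNReal.toReal_nonneg
  have hcnn : 0 ≤ c := ENNReal.toReal_nonneg
  set K := Finset.univ.filter (fun s : Fin M → Bool =>
      (1 - (1 / 2 : ℝ) ^ (n + 2)) * (μ (A s)).toReal ≤ b s) with hK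
  have hKbound : (K.card : ℝ) * ((1 - (1 / 2 : ℝ) ^ (n + 2)) * (1 / 2 : ℝ) ^ (N + M)) ≤ c := by
    calc (K.card : ℝ) * ((1 - (1 / 2 : ℝ) ^ (n + 2)) * (1 / 2 : ℝ) ^ (N + M))
        ≤ ∑ s ∈ K, b s := by
          have := Finset.card_nsmul_le_sum K b
            ((1 - (1 / 2 : ℝ) ^ (n + 2)) * (1 / 2 : ℝ) ^ (N + M)) (fun s hs => by
              rw [hK, Finset.mem_filter] at hs
              rw [← hAR s]; exact hs.2)
          simpa [nsmul_eq_mul] using this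
      _ ≤ ∑ s : Fin M → Bool, b s :=
          Finset.sum_le_sum_of_subset_of_nonneg (Finset.subset_univ K) (fun s _ _ => hbnn s)
      _ = c := hsumR.symm
  -- arithmetic
  set P : ℝ := 2 ^ (n + 2) with hP
  have hP1 : (1 : ℝ) < P := by
    rw [hP]; exact one_lt_pow₀ (by norm_num) (by omega)
  have hP0 : (0 : ℝ) < P - 1 := by linarith
  have hinv : (1 / 2 : ℝ) ^ (n + 2) = 1 / P := by
    rw [hP, div_pow, one_pow]
  have hinv1 : (1 / 2 : ℝ) ^ (n + 1) = 2 / P := by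
    rw [hP]
    rw [div_pow, one_pow]
    rw [pow_succ]
    field_simp
    ring
  have h2N : (0 : ℝ) < 2 ^ N := by positivity
  have h2M : (0 : ℝ) < 2 ^ M := by positivity
  have hNM : (1 / 2 : ℝ) ^ (N + M) = 1 / (2 ^ N * 2 ^ M) := by
    rw [div_pow, one_pow, pow_add]
  have hTRpos : (0 : ℝ) < (μ T).toReal := by
    rw [hTR]; positivity
  constructor
  · -- first inequality
    rw [hTR]
    rw [hinv, hNM] at hKbound
    have hrw : (1 / 2 : ℝ) ^ N = 1 / 2 ^ N := by rw [div_pow, one_pow]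
    rw [div_le_iff₀ h2M, hrw, one_div, div_inv_eq_mul]
    have key : (K.card : ℝ) * (1 - 1 / P) ≤ c * (2 ^ N * 2 ^ M) := by
      have := mul_le_mul_of_nonneg_right hKbound (le_of_lt (mul_pos h2N h2M))
      calc (K.card : ℝ) * (1 - 1 / P)
          = (K.card : ℝ) * ((1 - 1 / P) * (1 / (2 ^ N * 2 ^ M))) * (2 ^ N * 2 ^ M) := by
            field_simp
        _ ≤ c * (2 ^ N * 2 ^ M) := this
    have h1P : 0 < 1 - 1 / P := by
      rw [sub_pos, div_lt_one (by linarith)]; linarith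
    have hPne : P ≠ 0 := by linarith
    calc (K.card : ℝ) ≤ c * (2 ^ N * 2 ^ M) / (1 - 1 / P) := (le_div_iff₀ h1P).mpr key
      _ = P / (P - 1) * (c * 2 ^ N) * 2 ^ M := by
          field_simp
  · -- second inequality
    have hca : c / (μ T).toReal ≤ 1 - 2 / P := by
      rw [div_le_iff₀ hTRpos]
      rw [← hinv1]
      exact hdens
    have hca0 : 0 ≤ c / (μ T).toReal := div_nonneg hcnn hTRpos.le
    calc P / (P - 1) * (c / (μ T).toReal) ≤ P / (P - 1) * (1 - 2 / P) := by
          apply mul_le_mul_of_nonneg_left hca (by positivity)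
      _ = (P - 2) / (P - 1) := by field_simp
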